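/- Let 1/4 < λ < 1/3, let E be the self-similar set in ℝ² generated by the four similitudes x ↦ λx + a_i with a₁ = (0,0), a₂ = (1−λ, 0), a₃ = ((1−λ)/2, 0), a₄ = ((1−λ)/2, 1−λ), let 0 < p < 1/2, and let μ be the self-similar measure with weights p₁ = p₂ = (1−p)/2 and p₃ = p₄ = p/2. If 𝚓 ∈ {1,2,3,4}^n is a word whose last k symbols all lie in {1,2}, then μ(E_{𝚓|_{n−k}} ∩ X(x, ℓ, α)) ≤ 2^{-k} μ(E_{𝚓|_{n−k}}) for all x ∈ E_𝚓, where ℓ is the y-axis and α = (1−3λ)/10. -/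

import Mathlib

open Set MeasureTheory Metric
open scoped ENNReal

noncomputable section

/-- The translation parts `a₁ = (0,0)`, `a₂ = (1−λ,0)`, `a₃ = ((1−λ)/2, 0)`,
`a₄ = ((1−λ)/2, 1−λ)` of the four generating similitudes. -/
def transPart (lam : ℝ) : Fin 4 → EuclideanSpace ℝ (Fin 2) := fun i =>
  (WithLp.equiv 2 (Fin 2 → ℝ)).symm
    (![![0, 0], ![1 - lam, 0], ![(1 - lam) / 2, 0], ![(1 - lam) / 2, 1 - lam]] i)

/-- The four generating similitudes `x ↦ λx + aᵢ`. -/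
def simMap (lam : ℝ) (i : Fin 4) (x : EuclideanSpace ℝ (Fin 2)) :
    EuclideanSpace ℝ (Fin 2) :=
  lam • x + transPart lam i

/-- The cylinder set `E_𝚓 = f_{j₁}∘⋯∘f_{j_n}(E)` coded by a word `𝚓`. -/
def cylSet (lam : ℝ) (E : Set (EuclideanSpace ℝ (Fin 2))) (w : List (Fin 4)) :
    Set (EuclideanSpace ℝ (Fin 2)) :=
  w.foldr (fun i s => simMap lam i '' s) E

/-- The Bernoulli weights `p₁ = p₂ = (1−p)/2`, `p₃ = p₄ = p/2`. -/
def wt (p : ℝ) : Fin 4 → ℝ≥0∞ := fun i =>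
  (![ENNReal.ofReal ((1 - p) / 2), ENNReal.ofReal ((1 - p) / 2),
     ENNReal.ofReal (p / 2), ENNReal.ofReal (p / 2)]) i

/-! The pieces `fᵢ(E)` are pairwise disjoint, since `E ⊆ [0,1]²` and the translations are
`(1 - λ)/2`-separated in some coordinate while `λ < (1 - λ)/2`; and `μ` is carried by `E`,
since the contractions map each thickening of `E` into a thinner one. Hence `μ(E_𝚓)` is the
product of the weights along `𝚓`.

The pieces `f₁(E), f₂(E)` (indices `0, 1` of `Fin 4`) sit at the horizontal ends of the
pattern: every other piece is at horizontal distance at least `(1 - λ)/2 - λ = (1 - 3λ)/2` from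
them, while within the unit square the cone of aperture `(1 - 3λ)/10` stays within horizontal
distance `(1 - 3λ)/5` of its apex. The cone condition is invariant under the similarities, so
peeling off the last `k` symbols one at a time shows that the cone at `x ∈ E_𝚓` meets
`E_{𝚓|_{n-k}}` only inside `E_𝚓`; and `μ(E_𝚓) ≤ 2^{-k} μ(E_{𝚓|_{n-k}})` because
`p₁ = p₂ ≤ 1/2`. -/

open scoped NNReal Topology
open Function

section SelfSimilarMeasure

variable {X ι : Type*} {f : ι → X → X} {E : Set X}

lemma foldr_image_subset (hfE : ∀ i, MapsTo (f i) E E) {A : Set X} (hA : A ⊆ E) (u : List ι) :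
    u.foldr (fun i s => f i '' s) A ⊆ E := by
  induction u with
  | nil => exact hA
  | cons i u ih => exact (image_mono ih).trans (hfE i).image_subset

lemma mapsTo_of_eq_iUnion_image (hE : E = ⋃ i, f i '' E) (i : ι) : MapsTo (f i) E E :=
  fun _ hx => by rw [hE]; exact mem_iUnion_of_mem i (mem_image_of_mem _ hx)

variable [MeasurableSpace X] [Fintype ι] {w : ι → ℝ≥0∞} {μ : Measure X}

lemma measure_image_eq_mul (hf : ∀ i, MeasurableEmbedding (f i))
    (hdisj : Pairwise (Disjoint on fun i => f i '' E)) (hμ : μ = ∑ i, w i • μ.map (f i))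
    (hμE : μ Eᶜ = 0) {A : Set X} (hA : A ⊆ E) (i : ι) :
    μ (f i '' A) = w i * μ A := by
  nth_rewrite 1 [hμ]
  simp only [Measure.finsetSum_apply, Measure.smul_apply, smul_eq_mul, (hf _).map_apply]
  rw [Finset.sum_eq_single i _ (by simp), (hf i).injective.preimage_image]
  intro j _ hji
  suffices f j ⁻¹' (f i '' A) ⊆ Eᶜ by rw [measure_mono_null this hμE, mul_zero]
  intro z hz hzE
  exact (hdisj hji).ne_of_mem (mem_image_of_mem _ hzE) (image_mono hA hz) rfl

lemma measure_foldr_image (hf : ∀ i, MeasurableEmbedding (f i)) (hfE : ∀ i, MapsTo (f i) E E)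
    (hdisj : Pairwise (Disjoint on fun i => f i '' E)) (hμ : μ = ∑ i, w i • μ.map (f i))
    (hμE : μ Eᶜ = 0) {A : Set X} (hA : A ⊆ E) (u : List ι) :
    μ (u.foldr (fun i s => f i '' s) A) = (u.map w).prod * μ A := by
  induction u with
  | nil => simp
  | cons i u ih =>
    rw [List.foldr_cons, measure_image_eq_mul hf hdisj hμ hμE (foldr_image_subset hfE hA u), ih,
      List.map_cons, List.prod_cons, mul_assoc]

variable [MetricSpace X] [BorelSpace X]

lemma measure_thickening_le_measure_thickening_mul {K : ℝ≥0} (hK : 0 < K)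
    (hf : ∀ i, LipschitzWith K (f i)) (hfE : ∀ i, MapsTo (f i) E E) (hw : ∑ i, w i = 1)
    (hμ : μ = ∑ i, w i • μ.map (f i)) (r : ℝ) :
    μ (thickening r E) ≤ μ (thickening (K * r) E) := by
  have hmaps : ∀ i, MapsTo (f i) (thickening r E) (thickening (K * r) E) := by
    intro i z hz
    obtain ⟨e, he, hze⟩ := mem_thickening_iff.mp hz
    refine mem_thickening_iff.mpr ⟨f i e, hfE i he, ?_⟩
    calc dist (f i z) (f i e) ≤ K * dist z e := (hf i).dist_le_mul z e
      _ < K * r := mul_lt_mul_of_pos_left hze hK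
  calc μ (thickening r E) = ∑ i, w i * μ (thickening r E) := by
        rw [← Finset.sum_mul, hw, one_mul]
    _ ≤ ∑ i, w i * μ (f i ⁻¹' thickening (K * r) E) := by
        gcongr with i; exact hmaps i
    _ = μ (thickening (K * r) E) := by
        nth_rewrite 2 [hμ]
        simp only [Measure.finsetSum_apply, Measure.smul_apply, smul_eq_mul,
          Measure.map_apply (hf _).continuous.measurable isOpen_thickening.measurableSet]

lemma measure_thickening_eq_measure_univ {K : ℝ≥0} (hK0 : 0 < K) (hK : K < 1)
    (hf : ∀ i, LipschitzWith K (f i)) (hfE : ∀ i, MapsTo (f i) E E) (hE : E.Nonempty)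
    (hw : ∑ i, w i = 1) (hμ : μ = ∑ i, w i • μ.map (f i)) {δ : ℝ} (hδ : 0 < δ) :
    μ (thickening δ E) = μ univ := by
  refine le_antisymm (measure_mono (subset_univ _)) ?_
  have hiter (n : ℕ) (r : ℝ) :
      μ (thickening r E) ≤ μ (thickening ((K : ℝ) ^ n * r) E) := by
    induction n with
    | zero => simp
    | succ n ih =>
      rw [pow_succ', mul_assoc]
      exact ih.trans (measure_thickening_le_measure_thickening_mul hK0 hf hfE hw hμ _)
  have hle : ∀ n : ℕ, μ (thickening n E) ≤ μ (thickening δ E) := by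
    intro n
    obtain ⟨m, hm⟩ := exists_pow_lt_of_lt_one (div_pos hδ (n.cast_add_one_pos (α := ℝ))) hK
    refine (hiter m n).trans (measure_mono (thickening_mono ?_ E))
    calc (K : ℝ) ^ m * n ≤ K ^ m * (n + 1) := by gcongr; linarith
      _ ≤ δ := ((lt_div_iff₀ (n.cast_add_one_pos (α := ℝ))).mp hm).le
  obtain ⟨e, he⟩ := hE
  have hcover : (⋃ n : ℕ, thickening (n : ℝ) E) = univ := by
    refine eq_univ_of_forall fun z => mem_iUnion.mpr ?_
    obtain ⟨n, hn⟩ := exists_nat_gt (dist z e)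
    exact ⟨n, mem_thickening_iff.mpr ⟨e, he, hn⟩⟩
  calc μ univ = ⨆ n : ℕ, μ (thickening n E) := by
        rw [← hcover, Monotone.measure_iUnion]
        exact fun m n hmn => thickening_mono (Nat.cast_le.mpr hmn) E
    _ ≤ μ (thickening δ E) := iSup_le hle

lemma measure_compl_eq_zero_of_isClosed [IsFiniteMeasure μ] {K : ℝ≥0} (hK0 : 0 < K)
    (hK : K < 1) (hf : ∀ i, LipschitzWith K (f i)) (hfE : ∀ i, MapsTo (f i) E E)
    (hE : E.Nonempty) (hEc : IsClosed E) (hw : ∑ i, w i = 1)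
    (hμ : μ = ∑ i, w i • μ.map (f i)) : μ Eᶜ = 0 := by
  have hlim := tendsto_measure_thickening_of_isClosed (μ := μ)
    ⟨1, one_pos, measure_ne_top μ _⟩ hEc
  have hconst : (fun r => μ (thickening r E)) =ᶠ[𝓝[>] 0] fun _ => μ univ :=
    eventually_nhdsWithin_of_forall fun r hr =>
      measure_thickening_eq_measure_univ hK0 hK hf hfE hE hw hμ hr
  have hEuniv : μ E = μ univ := tendsto_nhds_unique hlim (tendsto_const_nhds.congr' hconst.symm)
  rw [measure_compl hEc.measurableSet (measure_ne_top μ E), hEuniv, tsub_self]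

end SelfSimilarMeasure

local notation "ℝ²" => EuclideanSpace ℝ (Fin 2)

section FourMaps

variable {lam : ℝ}

lemma simMap_apply (lam : ℝ) (i : Fin 4) (x : ℝ²) (c : Fin 2) :
    simMap lam i x c = lam * x c + transPart lam i c := by
  simp [simMap]

lemma simMap_sub_simMap (lam : ℝ) (i : Fin 4) (x y : ℝ²) :
    simMap lam i x - simMap lam i y = lam • (x - y) := by
  simp only [simMap, smul_sub]
  abel

lemma lipschitzWith_simMap (hlam : 0 ≤ lam) (i : Fin 4) :
    LipschitzWith lam.toNNReal (simMap lam i) :=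
  LipschitzWith.of_dist_le_mul fun x y => by
    rw [dist_eq_norm, dist_eq_norm, simMap_sub_simMap, norm_smul, Real.norm_of_nonneg hlam,
      Real.coe_toNNReal lam hlam]

lemma measurableEmbedding_simMap (hlam : lam ≠ 0) (i : Fin 4) :
    MeasurableEmbedding (simMap lam i) :=
  ((Homeomorph.smulOfNeZero lam hlam).trans
    (Homeomorph.addRight (transPart lam i))).measurableEmbedding

lemma transPart_mem_Icc (hlam : lam ≤ 1) (i : Fin 4) (c : Fin 2) :
    transPart lam i c ∈ Icc 0 (1 - lam) := by
  fin_cases i <;> fin_cases c <;> simp [transPart] <;> (try constructor) <;> linarith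

lemma half_le_abs_transPart_sub_zero (hlam : lam ≤ 1) {i j : Fin 4} (hi : i = 0 ∨ i = 1)
    (hj : j ≠ i) : (1 - lam) / 2 ≤ |transPart lam i 0 - transPart lam j 0| := by
  rcases hi with rfl | rfl <;> fin_cases j <;> simp_all [transPart, le_abs] <;> grind

lemma exists_half_le_abs_transPart_sub (hlam : lam ≤ 1) {i j : Fin 4} (hij : i ≠ j) :
    ∃ c, (1 - lam) / 2 ≤ |transPart lam i c - transPart lam j c| := by
  fin_cases i <;> fin_cases j <;> simp_all [transPart, le_abs] <;> grind

variable {E : Set ℝ²}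

lemma coord_mem_Icc_of_mem (hlam0 : 0 ≤ lam) (hlam1 : lam < 1) (hEc : IsCompact E)
    (hE : E = ⋃ i, simMap lam i '' E) {z : ℝ²} (hz : z ∈ E) (c : Fin 2) :
    z c ∈ Icc 0 1 := by
  have hcont : Continuous fun y : ℝ² => y c := (EuclideanSpace.proj c).continuous
  have hpiece : ∀ y ∈ E, ∃ u ∈ E, ∃ i, y c = lam * u c + transPart lam i c := by
    intro y hy
    rw [hE, mem_iUnion] at hy
    obtain ⟨i, u, hu, rfl⟩ := hy
    exact ⟨u, hu, i, simMap_apply lam i u c⟩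
  obtain ⟨zmax, hzmax, hmax⟩ := hEc.exists_isMaxOn ⟨z, hz⟩ hcont.continuousOn
  obtain ⟨zmin, hzmin, hmin⟩ := hEc.exists_isMinOn ⟨z, hz⟩ hcont.continuousOn
  have hle_one : zmax c ≤ 1 := by
    obtain ⟨u, hu, i, hzu⟩ := hpiece zmax hzmax
    have := (transPart_mem_Icc hlam1.le i c).2
    have : u c ≤ zmax c := hmax hu
    nlinarith
  have hnonneg : 0 ≤ zmin c := by
    obtain ⟨u, hu, i, hzu⟩ := hpiece zmin hzmin
    have := (transPart_mem_Icc hlam1.le i c).1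
    have : zmin c ≤ u c := hmin hu
    nlinarith
  exact ⟨hnonneg.trans (hmin hz), (hmax hz).trans hle_one⟩

lemma abs_transPart_sub_sub_le_abs_sub (hlam0 : 0 ≤ lam)
    (hbox : ∀ y ∈ E, ∀ c, y c ∈ Icc 0 1)
    {i j : Fin 4} {z z' : ℝ²} (hz : z ∈ simMap lam i '' E) (hz' : z' ∈ simMap lam j '' E)
    (c : Fin 2) : |transPart lam i c - transPart lam j c| - lam ≤ |z c - z' c| := by
  obtain ⟨u, hu, rfl⟩ := hz
  obtain ⟨u', hu', rfl⟩ := hz'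
  have hu := hbox u hu c
  have hu' := hbox u' hu' c
  have hsmall : |lam * (u c - u' c)| ≤ lam := by
    have : |u c - u' c| ≤ 1 :=
      abs_sub_le_iff.mpr ⟨by linarith [hu.2, hu'.1], by linarith [hu.1, hu'.2]⟩
    rw [abs_mul, abs_of_nonneg hlam0]
    exact mul_le_of_le_one_right hlam0 this
  have hdiff : simMap lam i u c - simMap lam j u' c - lam * (u c - u' c)
      = transPart lam i c - transPart lam j c := by
    rw [simMap_apply, simMap_apply]; ring
  have htri := abs_sub (simMap lam i u c - simMap lam j u' c) (lam * (u c - u' c))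
  rw [hdiff] at htri
  linarith

lemma pairwise_disjoint_simMap_image (hlam0 : 0 ≤ lam) (hlam : lam < 1 / 3)
    (hbox : ∀ y ∈ E, ∀ c, y c ∈ Icc 0 1) :
    Pairwise (Disjoint on fun i => simMap lam i '' E) := by
  intro i j hij
  refine Set.disjoint_left.mpr fun z hzi hzj => ?_
  obtain ⟨c, hc⟩ := exists_half_le_abs_transPart_sub (by linarith) hij
  have := abs_transPart_sub_sub_le_abs_sub hlam0 hbox hzi hzj c
  rw [sub_self, abs_zero] at this
  linarith

lemma norm_sub_le_two {z z' : ℝ²} (hz : ∀ c, z c ∈ Icc 0 1) (hz' : ∀ c, z' c ∈ Icc 0 1) :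
    ‖z - z'‖ ≤ 2 := by
  have hsq := EuclideanSpace.norm_sq_eq (z - z')
  have hcoord : ∀ c, ‖(z - z') c‖ ^ 2 ≤ 1 := fun c => by
    rw [PiLp.sub_apply, Real.norm_eq_abs, sq_abs]
    obtain ⟨h0, h1⟩ := hz c
    obtain ⟨h0', h1'⟩ := hz' c
    nlinarith
  rw [Fin.sum_univ_two] at hsq
  nlinarith [hcoord 0, hcoord 1, norm_nonneg (z - z')]

lemma cylSet_subset (hE : E = ⋃ i, simMap lam i '' E) (u : List (Fin 4)) :
    cylSet lam E u ⊆ E :=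
  foldr_image_subset (mapsTo_of_eq_iUnion_image hE) subset_rfl u

lemma wt_le_inv_two {p : ℝ} (hp : 0 ≤ p) {s : Fin 4} (hs : s = 0 ∨ s = 1) :
    wt p s ≤ 2⁻¹ := by
  rcases hs with rfl | rfl <;>
  · rw [← ENNReal.ofReal_ofNat 2, ← ENNReal.ofReal_inv_of_pos two_pos]
    exact ENNReal.ofReal_le_ofReal (by linarith)

lemma sum_wt {p : ℝ} (hp : 0 ≤ p) (hp1 : p ≤ 1) : ∑ i, wt p i = 1 := by
  simp only [Fin.sum_univ_four, wt, Matrix.cons_val]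
  have h1 : 0 ≤ (1 - p) / 2 := by linarith
  have h2 : 0 ≤ p / 2 := by linarith
  rw [← ENNReal.ofReal_add h1 h1, ← ENNReal.ofReal_add (add_nonneg h1 h1) h2,
    ← ENNReal.ofReal_add (add_nonneg (add_nonneg h1 h1) h2) h2, ← ENNReal.ofReal_one]
  congr 1
  ring

lemma prod_map_wt_le_inv_two_pow {p : ℝ} (hp : 0 ≤ p) {v : List (Fin 4)}
    (hv : ∀ s ∈ v, s = 0 ∨ s = 1) : (v.map (wt p)).prod ≤ 2⁻¹ ^ v.length := by
  rw [← List.length_map (f := wt p)]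
  refine List.prod_le_pow_card _ _ fun s hs => ?_
  obtain ⟨s, hsv, rfl⟩ := List.mem_map.mp hs
  exact wt_le_inv_two hp (hv s hsv)

lemma measure_cylSet {μ : Measure ℝ²} [IsFiniteMeasure μ] (hlam0 : 0 < lam)
    (hlam : lam < 1 / 3) (hEc : IsCompact E) (hE : E = ⋃ i, simMap lam i '' E)
    (hEne : E.Nonempty) {p : ℝ} (hp : 0 ≤ p) (hp1 : p ≤ 1)
    (hμ : μ = ∑ i, wt p i • μ.map (simMap lam i)) {A : Set ℝ²} (hA : A ⊆ E)
    (u : List (Fin 4)) : μ (cylSet lam A u) = (u.map (wt p)).prod * μ A := by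
  have hmaps := mapsTo_of_eq_iUnion_image hE
  have hbox : ∀ y ∈ E, ∀ c, y c ∈ Icc 0 1 := fun y hy =>
    coord_mem_Icc_of_mem hlam0.le (by linarith) hEc hE hy
  have hμE : μ Eᶜ = 0 :=
    measure_compl_eq_zero_of_isClosed (Real.toNNReal_pos.mpr hlam0)
      (Real.toNNReal_lt_one.mpr (by linarith)) (lipschitzWith_simMap hlam0.le) hmaps hEne
      hEc.isClosed (sum_wt hp hp1) hμ
  exact measure_foldr_image (measurableEmbedding_simMap hlam0.ne') hmaps
    (pairwise_disjoint_simMap_image hlam0.le hlam hbox) hμ hμE hA u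

/-- `X(0, ℓ, α)` for the `y`-axis `ℓ`, with `dist(v, ℓ)` written as `|v 0|`. -/
def verticalCone (α : ℝ) : Set ℝ² := {v | |v 0| < α * ‖v‖}

lemma mem_verticalCone_of_infDist_lt {α : ℝ} {v : ℝ²}
    (h : infDist v {z : ℝ² | z 0 = 0} < α * ‖v‖) : v ∈ verticalCone α := by
  refine lt_of_le_of_lt ((le_infDist ⟨0, by simp⟩).mpr fun z hz => ?_) h
  have := PiLp.dist_apply_le v z 0
  rwa [Real.dist_eq, show z 0 = 0 from hz, sub_zero] at this

lemma smul_mem_verticalCone_iff {α s : ℝ} (hs : 0 < s) {v : ℝ²} :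
    s • v ∈ verticalCone α ↔ v ∈ verticalCone α := by
  simp only [verticalCone, mem_ofPred_eq, PiLp.smul_apply, smul_eq_mul, abs_mul, norm_smul,
    Real.norm_eq_abs, abs_of_pos hs, mul_left_comm α s]
  exact mul_lt_mul_iff_right₀ hs

lemma mem_simMap_image_of_sub_mem_verticalCone (hlam0 : 0 ≤ lam) (hlam : lam < 1 / 3)
    (hbox : ∀ y ∈ E, ∀ c, y c ∈ Icc 0 1) (hE : E = ⋃ i, simMap lam i '' E)
    {i : Fin 4} (hi : i = 0 ∨ i = 1) {z z' : ℝ²} (hz : z ∈ E)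
    (hz' : z' ∈ simMap lam i '' E)
    (hcone : z - z' ∈ verticalCone ((1 - 3 * lam) / 10)) : z ∈ simMap lam i '' E := by
  obtain ⟨j, hzj⟩ : ∃ j, z ∈ simMap lam j '' E := mem_iUnion.mp (hE ▸ hz)
  by_contra hzi
  have hji : j ≠ i := by rintro rfl; exact hzi hzj
  have hz'E : z' ∈ E := (mapsTo_of_eq_iUnion_image hE i).image_subset hz'
  have hgap := abs_transPart_sub_sub_le_abs_sub hlam0 hbox hz' hzj 0
  have hhalf := half_le_abs_transPart_sub_zero (by linarith : lam ≤ 1) hi hji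
  have hnorm := norm_sub_le_two (hbox z hz) (hbox z' hz'E)
  simp only [verticalCone, mem_ofPred_eq, PiLp.sub_apply] at hcone
  rw [abs_sub_comm (z' 0)] at hgap
  nlinarith [mul_le_mul_of_nonneg_left hnorm (by linarith : (0 : ℝ) ≤ (1 - 3 * lam) / 10)]

def wordMap (lam : ℝ) (u : List (Fin 4)) : ℝ² → ℝ² :=
  u.foldr (fun i g => simMap lam i ∘ g) id

lemma cylSet_eq_image_wordMap (lam : ℝ) (S : Set ℝ²) (u : List (Fin 4)) :
    cylSet lam S u = wordMap lam u '' S := by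
  induction u with
  | nil => exact (image_id S).symm
  | cons i u ih =>
    simp only [cylSet, wordMap, List.foldr_cons, image_comp] at ih ⊢
    rw [ih]

lemma wordMap_sub_wordMap (lam : ℝ) (u : List (Fin 4)) (x y : ℝ²) :
    wordMap lam u x - wordMap lam u y = lam ^ u.length • (x - y) := by
  induction u with
  | nil => simp [wordMap]
  | cons i u ih =>
    simp only [wordMap, List.foldr_cons, Function.comp_apply] at ih ⊢
    rw [simMap_sub_simMap, ih, smul_smul, List.length_cons, pow_succ']

lemma cylSet_append (lam : ℝ) (S : Set ℝ²) (u v : List (Fin 4)) :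
    cylSet lam S (u ++ v) = cylSet lam (cylSet lam S v) u :=
  List.foldr_append

lemma mem_cylSet_append_singleton_of_sub_mem_verticalCone (hlam0 : 0 < lam)
    (hlam : lam < 1 / 3) (hbox : ∀ y ∈ E, ∀ c, y c ∈ Icc 0 1)
    (hE : E = ⋃ i, simMap lam i '' E) {i : Fin 4} (hi : i = 0 ∨ i = 1)
    {u v : List (Fin 4)} {x y : ℝ²}
    (hx : x ∈ cylSet lam E (u ++ i :: v)) (hy : y ∈ cylSet lam E u)
    (hcone : y - x ∈ verticalCone ((1 - 3 * lam) / 10)) : y ∈ cylSet lam E (u ++ [i]) := by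
  rw [cylSet_append, cylSet_eq_image_wordMap] at hx ⊢
  rw [cylSet_eq_image_wordMap] at hy
  obtain ⟨x', hx', rfl⟩ := hx
  obtain ⟨y', hy', rfl⟩ := hy
  rw [wordMap_sub_wordMap, smul_mem_verticalCone_iff (pow_pos hlam0 _)] at hcone
  have hx'E : x' ∈ simMap lam i '' E := image_mono (cylSet_subset hE v) hx'
  exact mem_image_of_mem _
    (mem_simMap_image_of_sub_mem_verticalCone hlam0.le hlam hbox hE hi hy' hx'E hcone)

lemma mem_cylSet_append_of_sub_mem_verticalCone (hlam0 : 0 < lam) (hlam : lam < 1 / 3)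
    (hbox : ∀ y ∈ E, ∀ c, y c ∈ Icc 0 1) (hE : E = ⋃ i, simMap lam i '' E) {x y : ℝ²}
    (hcone : y - x ∈ verticalCone ((1 - 3 * lam) / 10)) {v : List (Fin 4)}
    (hv : ∀ s ∈ v, s = 0 ∨ s = 1) {u : List (Fin 4)} (hx : x ∈ cylSet lam E (u ++ v))
    (hy : y ∈ cylSet lam E u) : y ∈ cylSet lam E (u ++ v) := by
  induction v generalizing u with
  | nil => simpa using hy
  | cons i v ih =>
    have hy' := mem_cylSet_append_singleton_of_sub_mem_verticalCone hlam0 hlam hbox hE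
      (hv i List.mem_cons_self) hx hy hcone
    rw [← List.singleton_append, ← List.append_assoc] at hx ⊢
    exact ih (fun s hs => hv s (List.mem_cons_of_mem i hs)) hx hy'

end FourMaps

theorem stmt_19_general (lam : ℝ) (hlam : 1 / 4 < lam) (hlam' : lam < 1 / 3)
    (E : Set (EuclideanSpace ℝ (Fin 2))) (hEc : IsCompact E)
    (hE : E = ⋃ i : Fin 4, simMap lam i '' E)
    (p : ℝ) (hp : 0 < p) (hp' : p < 1 / 2)
    (μ : Measure (EuclideanSpace ℝ (Fin 2))) (hprob : IsProbabilityMeasure μ)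
    (hμ : μ = ∑ i : Fin 4, wt p i • Measure.map (simMap lam i) μ)
    (w : List (Fin 4)) (k : ℕ) (hk : k ≤ w.length)
    (hlast : ∀ s ∈ w.drop (w.length - k), s = 0 ∨ s = 1) :
    ∀ x ∈ cylSet lam E w,
      μ (cylSet lam E (w.take (w.length - k)) ∩
          {y | infDist (y - x) {z : EuclideanSpace ℝ (Fin 2) | z 0 = 0}
            < (1 - 3 * lam) / 10 * ‖y - x‖})
        ≤ ((2:ℝ≥0∞)⁻¹) ^ k * μ (cylSet lam E (w.take (w.length - k))) := by
  intro x hx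
  have := hprob
  have hlam0 : 0 < lam := by linarith
  have hbox : ∀ y ∈ E, ∀ c, y c ∈ Icc 0 1 := fun y hy =>
    coord_mem_Icc_of_mem hlam0.le (by linarith) hEc hE hy
  have hcyl (u : List (Fin 4)) {A : Set (EuclideanSpace ℝ (Fin 2))} (hA : A ⊆ E) :=
    measure_cylSet hlam0 hlam' hEc hE ⟨x, cylSet_subset hE w hx⟩ hp.le (by linarith) hμ hA u
  set m := w.length - k
  have hw : w.take m ++ w.drop m = w := List.take_append_drop m w
  have hk' : (w.drop m).length = k := by rw [List.length_drop]; omega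
  calc _ ≤ μ (cylSet lam E w) := measure_mono <| by
        rintro y ⟨hy, hcone⟩
        rw [← hw] at hx ⊢
        exact mem_cylSet_append_of_sub_mem_verticalCone hlam0 hlam' hbox hE
          (mem_verticalCone_of_infDist_lt hcone) hlast hx hy
    _ = ((w.take m).map (wt p)).prod * (((w.drop m).map (wt p)).prod * μ E) := by
        nth_rewrite 1 [← hw]
        rw [cylSet_append, hcyl _ (cylSet_subset hE _), hcyl _ subset_rfl]
    _ ≤ ((w.take m).map (wt p)).prod * (2⁻¹ ^ k * μ E) := by
        gcongr
        exact hk' ▸ prod_map_wt_le_inv_two_pow hp.le hlast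
    _ = 2⁻¹ ^ k * μ (cylSet lam E (w.take m)) := by
        rw [hcyl _ subset_rfl, mul_left_comm]

/-- Proposition: let `1/4 < λ < 1/3`, let `E ⊆ ℝ²` be the self-similar set of the
four similitudes `x ↦ λx + aᵢ`, let `0 < p < 1/2` and `μ` the self-similar measure
with weights `((1−p)/2, (1−p)/2, p/2, p/2)`. If the last `k` symbols of the word `𝚓`
all lie in `{1,2}`, then `μ(E_{𝚓|_{n−k}} ∩ X(x,ℓ,α)) ≤ 2^{-k} μ(E_{𝚓|_{n−k}})` for
all `x ∈ E_𝚓`, where `ℓ` is the `y`-axis and `α = (1−3λ)/10`. -/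
theorem stmt_19 (lam : ℝ) (hlam : 1 / 4 < lam) (hlam' : lam < 1 / 3)
    (E : Set (EuclideanSpace ℝ (Fin 2))) (hEc : IsCompact E) (hEne : E.Nonempty)
    (hE : E = ⋃ i : Fin 4, simMap lam i '' E)
    (p : ℝ) (hp : 0 < p) (hp' : p < 1 / 2)
    (μ : Measure (EuclideanSpace ℝ (Fin 2))) (hprob : IsProbabilityMeasure μ)
    (hμ : μ = ∑ i : Fin 4, wt p i • Measure.map (simMap lam i) μ)
    (w : List (Fin 4)) (k : ℕ) (hk : k ≤ w.length)
    (hlast : ∀ s ∈ w.drop (w.length - k), s = 0 ∨ s = 1) :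
    ∀ x ∈ cylSet lam E w,
      μ (cylSet lam E (w.take (w.length - k)) ∩
          {y | infDist (y - x) {z : EuclideanSpace ℝ (Fin 2) | z 0 = 0}
            < (1 - 3 * lam) / 10 * ‖y - x‖})
        ≤ ((2:ℝ≥0∞)⁻¹) ^ k * μ (cylSet lam E (w.take (w.length - k))) :=
  stmt_19_general lam hlam hlam' E hEc hE p hp hp' μ hprob hμ w k hk hlast

end
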